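/- Let Q_1, Q_2, W_1, W_2 be real numbers with min(Q_1, Q_2, W_1, W_2) = 0 and Q_1 + Q_2 < W_1 + W_2. Set C_0 = Q_1 + Q_2, C_{−1} = Q_1 + Q_2 + W_1 + W_2, and assume C_0 > 0 and C_{−1} > 2·C_0. Define X = min(Q_2, W_1) and Y = Q_1 + W_1. Then min(2Y, C_{−1}, 2X + Y, Y + C_0) = X + Y; that is, the point (X,Y) lies on the component Γ_2 of the tropical spectral curve. -/

import Mathlib

/-!
Subtracting `Y` from every term, the curve equation becomes
`min(Q₁ + W₁, Q₂ + W₂, 2X, Q₁ + Q₂) = X` with `X = min(Q₂, W₁)`. All coordinates are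
nonnegative, so every term is at least `X`; and whichever coordinate vanishes makes one term
equal to `X`. The only delicate case is `W₂ = 0`, where `Q₁ + Q₂ < W₁` forces `X = Q₂ = Q₂ + W₂`.
-/

section MinOfFour

variable {a b c d : ℝ}

lemma nonneg_of_min_min_eq_zero (h : min (min a b) (min c d) = 0) :
    0 ≤ a ∧ 0 ≤ b ∧ 0 ≤ c ∧ 0 ≤ d := by
  simp only [← h, min_le_iff, le_refl, true_or, or_true, and_self]

lemma eq_zero_of_min_min_eq_zero (h : min (min a b) (min c d) = 0) :
    a = 0 ∨ b = 0 ∨ c = 0 ∨ d = 0 := by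
  rcases min_choice (min a b) (min c d) with hab | hcd
  · rcases min_choice a b with ha | hb
    · exact .inl (by rw [← h, hab, ha])
    · exact .inr (.inl (by rw [← h, hab, hb]))
  · rcases min_choice c d with hc | hd
    · exact .inr (.inr (.inl (by rw [← h, hcd, hc])))
    · exact .inr (.inr (.inr (by rw [← h, hcd, hd])))

end MinOfFour

theorem min_shifted_curve_terms_eq {q₁ q₂ w₁ w₂ : ℝ} (hq₁ : 0 ≤ q₁) (hq₂ : 0 ≤ q₂)
    (hw₁ : 0 ≤ w₁) (hw₂ : 0 ≤ w₂) (hzero : q₁ = 0 ∨ q₂ = 0 ∨ w₁ = 0 ∨ w₂ = 0)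
    (hlt : q₁ + q₂ < w₁ + w₂) :
    min (min (q₁ + w₁) (q₂ + w₂)) (min (2 * min q₂ w₁) (q₁ + q₂)) = min q₂ w₁ := by
  refine le_antisymm ?_ (le_min (le_min ?_ ?_) (le_min ?_ ?_))
  · rcases hzero with rfl | rfl | rfl | rfl
    · exact le_min (min_le_of_right_le (min_le_of_right_le (by simp)))
        (min_le_of_left_le (min_le_of_left_le (by simp)))
    · exact min_le_of_right_le (min_le_of_left_le (by simp [min_eq_left hw₁]))
    · exact min_le_of_right_le (min_le_of_left_le (by simp [min_eq_right hq₂]))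
    · have hX : min q₂ w₁ = q₂ := min_eq_left (by linarith)
      exact min_le_of_left_le (min_le_of_right_le (by simp [hX]))
  · exact (min_le_right _ _).trans (by linarith)
  · exact (min_le_left _ _).trans (by linarith)
  · linarith [le_min hq₂ hw₁]
  · exact (min_le_left _ _).trans (by linarith)

theorem ud_eigenvector_map_g1_on_curve (Q1 Q2 W1 W2 C0 Cm1 X Y : ℝ)
    (hmin : min (min Q1 Q2) (min W1 W2) = 0)
    (hlt : Q1 + Q2 < W1 + W2)
    (hC0 : C0 = Q1 + Q2) (hCm1 : Cm1 = Q1 + Q2 + W1 + W2)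
    (hX : X = min Q2 W1) (hY : Y = Q1 + W1) :
    min (min (2 * Y) Cm1) (min (2 * X + Y) (Y + C0)) = X + Y := by
  obtain ⟨hQ1, hQ2, hW1, hW2⟩ := nonneg_of_min_min_eq_zero hmin
  have hshifted := min_shifted_curve_terms_eq hQ1 hQ2 hW1 hW2
    (eq_zero_of_min_min_eq_zero hmin) hlt
  rw [← hX, ← hC0] at hshifted
  calc min (min (2 * Y) Cm1) (min (2 * X + Y) (Y + C0))
      = min (min ((Q1 + W1) + Y) ((Q2 + W2) + Y)) (min (2 * X + Y) (C0 + Y)) := by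
        rw [hCm1, hY]; ring_nf
    _ = X + Y := by simp only [min_add_add_right, hshifted]
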